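/- Quantum pentagon periodicity (the quantum frieze of variables in type A_2): define x_k ∈ D for all k ∈ ℤ by 5-periodicity x_{k+5} = x_k together with x_1 = Y_1, x_2 = Y_2, x_3 = Y_1^{−1}(1 + ν Y_2), x_4 = Y_2^{−1} Y_1^{−1}(Y_1 + ν + q Y_2), x_5 = (1 + ν Y_1) Y_2^{−1}. Then x_k x_{k+2} = 1 + ν x_{k+1} for every k ∈ ℤ. In particular, the quantum frieze of variables associated with a linearly oriented Dynkin quiver of type A with two vertices is 5-periodic along its zigzag, with the five entries listed above. -/

import Mathlib

/-!
Each relation `x k * x (k + 2) = 1 + ν * x (k + 1)` is invariant under `k ↦ k + 5`, so it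
suffices to check `k = 0, …, 4`. The cases `k = 0, 1` are cancellations and `k = 2` only uses
that `ν` is central. For `k = 3, 4` one expands, pulls `ν` to the front of every monomial and
cancels the remaining words in `Y₁^{±1}, Y₂^{±1}` with the `q`-commutation relations
`Y₁Y₂ = qY₂Y₁`, `Y₂⁻¹Y₁ = qY₁Y₂⁻¹`, `Y₁⁻¹Y₂⁻¹ = qY₂⁻¹Y₁⁻¹`, `Y₂Y₁⁻¹ = qY₁⁻¹Y₂`, each obtained
from the previous one by inverting a factor.
-/

theorem Function.Periodic.map_emod {α : Type*} {f : ℤ → α} {n : ℤ} (hf : Function.Periodic f n)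
    (k : ℤ) : f (k % n) = f k := by
  rw [Int.emod_def, mul_comm]
  exact hf.sub_int_mul_eq _

def QCommute {R : Type*} [Mul R] (q a b : R) : Prop :=
  a * b = q * (b * a)

namespace QCommute

variable {R : Type*} [Ring R]

theorem units_inv_swap {q x : R} {y : Rˣ} (hq : Commute q ↑y⁻¹) (h : QCommute q x y) :
    QCommute q ↑y⁻¹ x :=
  calc ↑y⁻¹ * x = ↑y⁻¹ * (x * y) * ↑y⁻¹ := by rw [mul_assoc, Units.mul_inv_cancel_right]
    _ = ↑y⁻¹ * (q * (y * x)) * ↑y⁻¹ := by rw [h]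
    _ = q * (x * ↑y⁻¹) := by rw [← hq.left_comm, Units.inv_mul_cancel_left, mul_assoc]

theorem sq_mul_mul {ν x y : R} (h : QCommute (ν ^ 2) x y) : ν * (ν * (y * x)) = x * y := by
  rw [h, sq, mul_assoc]

theorem sq_mul_mul_mul {ν x y : R} (h : QCommute (ν ^ 2) x y) (s : R) :
    ν * (ν * (y * (x * s))) = x * (y * s) := by
  rw [← mul_assoc x, ← h.sq_mul_mul]
  simp only [mul_assoc]

end QCommute

section PentagonFrieze

variable {R : Type*} [Ring R] {ν : R} {a b : Rˣ}

theorem pentagon_frieze_two (hν : ∀ r, Commute ν r) :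
    (b : R) * (↑b⁻¹ * ↑a⁻¹ * (a + ν + ν ^ 2 * b)) = 1 + ν * (↑a⁻¹ * (1 + ν * b)) := by
  simp only [mul_add, mul_one, mul_assoc, sq, ← (hν _).left_comm, (hν _).symm.eq,
    Units.mul_inv_cancel_left, Units.inv_mul, Units.mul_inv]
  abel

theorem pentagon_frieze_three (hν : ∀ r, Commute ν r) (hab : QCommute (ν ^ 2) a b) :
    ↑a⁻¹ * (1 + ν * b) * ((1 + ν * a) * ↑b⁻¹) =
      1 + ν * (↑b⁻¹ * ↑a⁻¹ * (a + ν + ν ^ 2 * b)) := by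
  have hq : ∀ r, Commute (ν ^ 2) r := fun r => (hν r).pow_left 2
  have hba : QCommute (ν ^ 2) ↑b⁻¹ a := hab.units_inv_swap (hq _)
  have hab' : QCommute (ν ^ 2) ↑a⁻¹ ↑b⁻¹ := hba.units_inv_swap (hq _)
  have hba' : QCommute (ν ^ 2) b ↑a⁻¹ := hab'.units_inv_swap (hq _)
  simp only [mul_add, add_mul, mul_one, one_mul, mul_assoc, sq, ← (hν _).left_comm, (hν _).symm.eq,
    hab'.sq_mul_mul, hab'.sq_mul_mul_mul, hba'.sq_mul_mul_mul, Units.inv_mul_cancel_left,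
    Units.mul_inv, Units.inv_mul]
  abel

theorem pentagon_frieze_four (hν : ∀ r, Commute ν r) (hab : QCommute (ν ^ 2) a b) :
    ↑b⁻¹ * ↑a⁻¹ * (a + ν + ν ^ 2 * b) * a = 1 + ν * ((1 + ν * a) * ↑b⁻¹) := by
  have hq : ∀ r, Commute (ν ^ 2) r := fun r => (hν r).pow_left 2
  have hba : QCommute (ν ^ 2) ↑b⁻¹ a := hab.units_inv_swap (hq _)
  have hab' : QCommute (ν ^ 2) ↑a⁻¹ ↑b⁻¹ := hba.units_inv_swap (hq _)
  simp only [mul_add, add_mul, one_mul, mul_one, mul_assoc, sq, ← (hν _).left_comm,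
    (hν _).symm.eq, hba.sq_mul_mul, hab'.sq_mul_mul_mul, Units.inv_mul]
  abel

end PentagonFrieze

/-- **Quantum pentagon periodicity**: the quantum frieze of variables associated with a
linearly oriented Dynkin quiver of type `A` with two vertices is `5`-periodic along its
zigzag, with the five entries `Y₁`, `Y₂`, `Y₁⁻¹(1 + ν Y₂)`, `Y₂⁻¹Y₁⁻¹(Y₁ + ν + q Y₂)`,
`(1 + ν Y₁)Y₂⁻¹`, and each consecutive triple satisfies the quantum frieze relation
`x k * x (k+2) = 1 + ν * x (k+1)`. -/
theorem quantum_pentagon_periodicity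
    (D : Type*) [Ring D] (ν : Dˣ) (hcen : ∀ r : D, (ν : D) * r = r * (ν : D))
    (Y₁ Y₂ : Dˣ)
    (hY : (Y₁ : D) * (Y₂ : D) = ((ν : D) ^ 2) * ((Y₂ : D) * (Y₁ : D)))
    (x : ℤ → D)
    (hper : ∀ k : ℤ, x (k + 5) = x k)
    (h1 : x 1 = (Y₁ : D))
    (h2 : x 2 = (Y₂ : D))
    (h3 : x 3 = ((Y₁⁻¹ : Dˣ) : D) * (1 + (ν : D) * (Y₂ : D)))
    (h4 : x 4 = ((Y₂⁻¹ : Dˣ) : D) * ((Y₁⁻¹ : Dˣ) : D) *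
      ((Y₁ : D) + (ν : D) + ((ν : D) ^ 2) * (Y₂ : D)))
    (h5 : x 5 = (1 + (ν : D) * (Y₁ : D)) * ((Y₂⁻¹ : Dˣ) : D)) :
    ∀ k : ℤ, x k * x (k + 2) = 1 + (ν : D) * x (k + 1) := by
  have hx : Function.Periodic x 5 := hper
  have base : ∀ r : ℤ, 0 ≤ r → r < 5 → x r * x (r + 2) = 1 + ν * x (r + 1) := by
    intro r hr₀ hr₅
    interval_cases r
    · show x 0 * x 2 = 1 + ν * x 1
      rw [← hx.eq, h5, h2, h1, Units.inv_mul_cancel_right]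
    · show x 1 * x 3 = 1 + ν * x 2
      rw [h1, h3, h2, Units.mul_inv_cancel_left]
    · show x 2 * x 4 = 1 + ν * x 3
      rw [h2, h4, h3, pentagon_frieze_two hcen]
    · show x 3 * x 5 = 1 + ν * x 4
      rw [h3, h5, h4, pentagon_frieze_three hcen hY]
    · show x 4 * x (1 + 5) = 1 + ν * x 5
      rw [hx, h4, h1, h5, pentagon_frieze_four hcen hY]
  intro k
  have hshift : ∀ j, x (k % 5 + j) = x (k + j) := fun j => (hx.add_const j).map_emod k
  have := base (k % 5) (Int.emod_nonneg k (by norm_num)) (Int.emod_lt_of_pos k (by norm_num))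
  rwa [hshift, hshift, hx.map_emod] at this
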